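/- arXiv:2509.10880 — 3 statements merged into one kernel-verified Lean document; each statement's English description precedes it below -/
import Mathlib

section
/- Suppose that for some k ∈ ℤ there exist u ∈ N(4,F) and y ∈ J_f such that α(r,h,x) = u · β_f^k · y. Then k = 0 or k = 2. (Equivalently: if k is not equal to 0 or 2, then the matrix α(r,h,x) does not lie in the double coset N(4,F)·β_f^k·J_f.) -/
open Matrix Polynomial IsLocalRing

/-- Membership in the fractional ideal `P_F^n = ϖ^n · O_F` inside the fraction field. -/
def inPpow {O F : Type*} [CommRing O] [Field F] [Algebra O F]
    (ϖ : O) (n : ℤ) (x : F) : Prop :=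
  ∃ t : O, x = (algebraMap O F ϖ) ^ n * algebraMap O F t

/-- Upper triangular unipotent 4×4 matrices: the group `N(4,F)`. -/
def IsUnipUpper {F : Type*} [Field F] (u : Matrix (Fin 4) (Fin 4) F) : Prop :=
  (∀ i, u i i = 1) ∧ ∀ i j : Fin 4, j < i → u i j = 0

/-- The matrix `α(r,h,x)` of the paper. -/
noncomputable def alphaMat {O F : Type*} [CommRing O] [Field F] [Algebra O F]
    (ϖ : O) (r : ℤ) (h : Matrix (Fin 2) (Fin 2) O) (x : F) :
    Matrix (Fin 4) (Fin 4) F :=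
  !![algebraMap O F (h 0 0) * (algebraMap O F ϖ) ^ r, 0,
       algebraMap O F (h 0 1) * (algebraMap O F ϖ) ^ r, 0;
     0, algebraMap O F (h 0 0) * (algebraMap O F ϖ) ^ r, 0,
       algebraMap O F (h 0 1) * (algebraMap O F ϖ) ^ r;
     algebraMap O F (h 1 0), algebraMap O F (h 0 0) * x * (algebraMap O F ϖ) ^ r,
       algebraMap O F (h 1 1), algebraMap O F (h 0 1) * x * (algebraMap O F ϖ) ^ r;
     0, algebraMap O F (h 1 0), 0, algebraMap O F (h 1 1)]

/-- The matrix `β_f`. -/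
noncomputable def betaf (F : Type*) [Field F] {O : Type*} [CommRing O] [Algebra O F]
    (c d ϖ : O) : Matrix (Fin 4) (Fin 4) F :=
  !![0, 0, 0, algebraMap O F c * (algebraMap O F ϖ) ^ (-2 : ℤ);
     1, 0, 0, 0;
     0, 1, 0, algebraMap O F d * (algebraMap O F ϖ) ^ (-1 : ℤ);
     0, 0, 1, 0]

/-- The matrix `σ_f = ϖ · β_f²`. -/
noncomputable def sigmaf (F : Type*) [Field F] {O : Type*} [CommRing O] [Algebra O F]
    (c d ϖ : O) : Matrix (Fin 4) (Fin 4) F :=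
  algebraMap O F ϖ • (betaf F c d ϖ) ^ 2

/-- The exponent matrix of the hereditary order: entries of `𝔓_4` lie in `P_F^{e(i,j)}`. -/
def eMatf : Matrix (Fin 4) (Fin 4) ℤ :=
  !![1, 0, 0, -1; 1, 1, 0, 0; 2, 1, 1, 0; 2, 2, 1, 1]

/-- Membership in `U^1 = I_4 + 𝔓_4`. -/
def inU1f {O F : Type*} [CommRing O] [Field F] [Algebra O F]
    (ϖ : O) (z : Matrix (Fin 4) (Fin 4) F) : Prop :=
  ∃ p : Matrix (Fin 4) (Fin 4) F,
    (∀ i j : Fin 4, inPpow ϖ (eMatf i j) (p i j)) ∧ z = 1 + p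

/-- The matrix `x₀c·I₄ + x₁·σ_f`. -/
noncomputable def mMatf (F : Type*) [Field F] {O : Type*} [CommRing O] [Algebra O F]
    (c d ϖ x0 x1 : O) : Matrix (Fin 4) (Fin 4) F :=
  algebraMap O F (x0 * c) • (1 : Matrix (Fin 4) (Fin 4) F) +
    algebraMap O F x1 • sigmaf F c d ϖ

/-- Membership in `J_f`. -/
def inJf (F : Type*) [Field F] {O : Type*} [CommRing O] [Algebra O F]
    (c d ϖ : O) (y : Matrix (Fin 4) (Fin 4) F) : Prop :=
  ∃ (x0 x1 : O) (z : Matrix (Fin 4) (Fin 4) F),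
    inU1f ϖ z ∧
    (∃ w : Oˣ, algebraMap O F (w : O) = (mMatf F c d ϖ x0 x1).det) ∧
    y = mMatf F c d ϖ x0 x1 * z

/-!
Write `σ = σ_f`. Since `σ = ϖ β_f²` and `σ² = d σ + c` with `c` a unit, `σ` is a unit of
`O_F[σ]`; hence, for `k = 2e` or `k = 2e + 1`, `β_f^k m` (with `m = x₀c + x₁σ`) equals `ϖ^{-e} s`
or `ϖ^{-e} β_f s` for a unit `s = a + bσ` of `O_F[σ]`. Left multiplication by `N(4,F)` fixes the
last row, and right multiplication by `U¹` only perturbs it modulo `ϖ`, so the last row of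
`α(r,h,x)`, namely `(0, h₂₁, 0, h₂₂)` with `h₂₁, h₂₂` not both in `P_F`, is read off from `s`.
For odd `k` the last row of `β_f s` is `(ϖb, 0, a + bd, 0)`, so the two zeros of `α` force
`ϖ ∣ b` and `ϖ ∣ a + bd`, contradicting that `s` is a unit. For even `k` we get
`(h₂₁, h₂₂) = ϖ^{-e} (ϖB, A)` with `A ≡ a + bd`, `B ≡ b` not both divisible by `ϖ`,
which pins `e ∈ {0, 1}`.
-/

section FractionRing

variable {O : Type*} [CommRing O] {F : Type*} [Field F] [Algebra O F] [IsFractionRing O F]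

theorem dvd_of_algebraMap_eq_zpow_mul {ϖ u v : O} {n : ℤ} (hn : 0 < n)
    (h : algebraMap O F v = algebraMap O F ϖ ^ n * algebraMap O F u) : ϖ ∣ v := by
  lift n to ℕ using hn.le
  have hv : v = ϖ ^ n * u :=
    IsFractionRing.injective O F (by rw [h, map_mul, map_pow, zpow_natCast])
  exact hv ▸ (dvd_pow_self ϖ (by omega)).mul_right u

theorem nonneg_of_algebraMap_eq_zpow_mul {ϖ u v : O} {n : ℤ} (hϖ : algebraMap O F ϖ ≠ 0)
    (hu : ¬ ϖ ∣ u) (h : algebraMap O F v = algebraMap O F ϖ ^ n * algebraMap O F u) :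
    0 ≤ n := by
  by_contra! hn
  refine hu (dvd_of_algebraMap_eq_zpow_mul (F := F) (n := -n) (u := v) (by omega) ?_)
  rw [h, ← mul_assoc, ← zpow_add₀ hϖ, neg_add_cancel, zpow_zero, one_mul]

-- In valuation terms: `min (v g₁) (v g₂) = n + min (v u) (v v) = n`.
theorem eq_zero_of_algebraMap_eq_zpow_mul {ϖ g₁ g₂ u v : O} {n : ℤ} (hϖ : algebraMap O F ϖ ≠ 0)
    (hg : ¬ (ϖ ∣ g₁ ∧ ϖ ∣ g₂)) (hu : ¬ ϖ ∣ u)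
    (h₁ : algebraMap O F g₁ = algebraMap O F ϖ ^ n * algebraMap O F u)
    (h₂ : algebraMap O F g₂ = algebraMap O F ϖ ^ n * algebraMap O F v) : n = 0 := by
  obtain hn | hn := (nonneg_of_algebraMap_eq_zpow_mul hϖ hu h₁).eq_or_lt
  · exact hn.symm
  · exact (hg ⟨dvd_of_algebraMap_eq_zpow_mul hn h₁, dvd_of_algebraMap_eq_zpow_mul hn h₂⟩).elim

theorem eq_zero_or_eq_one_of_algebraMap_eq_zpow_mul {ϖ g₁ g₂ A B : O} {e : ℤ}
    (hϖ : algebraMap O F ϖ ≠ 0) (hg : ¬ (ϖ ∣ g₁ ∧ ϖ ∣ g₂)) (hAB : ¬ (ϖ ∣ B ∧ ϖ ∣ A))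
    (h₁ : algebraMap O F g₁ = algebraMap O F ϖ ^ (-e) * algebraMap O F (ϖ * B))
    (h₂ : algebraMap O F g₂ = algebraMap O F ϖ ^ (-e) * algebraMap O F A) :
    e = 0 ∨ e = 1 := by
  have shift : ∀ X : O, algebraMap O F ϖ ^ (-e) * algebraMap O F (ϖ * X) =
      algebraMap O F ϖ ^ (1 - e) * algebraMap O F X := fun X => by
    rw [sub_eq_neg_add, zpow_add₀ hϖ, zpow_one, map_mul, mul_assoc]
  by_cases hA : ϖ ∣ A
  · obtain ⟨A', rfl⟩ := hA
    rw [shift] at h₁ h₂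
    have := eq_zero_of_algebraMap_eq_zpow_mul hϖ hg
      (fun hB => hAB ⟨hB, dvd_mul_right ϖ A'⟩) h₁ h₂
    omega
  · have := eq_zero_of_algebraMap_eq_zpow_mul hϖ (fun h => hg h.symm) hA h₂ h₁
    omega

end FractionRing

theorem isUnit_of_irreducible_map_residue {O : Type*} [CommRing O] [IsLocalRing O] {c d : O}
    (hf : Irreducible ((X ^ 2 - C d * X - C c : O[X]).map (residue O))) : IsUnit c := by
  by_contra hc
  have hc0 : residue O c = 0 := (residue_eq_zero_iff c).mpr hc
  have hfac : (X ^ 2 - C d * X - C c : O[X]).map (residue O) = X * (X - C (residue O d)) := by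
    simp only [Polynomial.map_sub, Polynomial.map_pow, Polynomial.map_mul, map_X, map_C, hc0,
      C_0, sub_zero]
    ring
  rcases hf.isUnit_or_isUnit hfac with h | h
  · exact not_isUnit_X h
  · exact not_isUnit_X_sub_C _ h

theorem not_dvd_and_dvd_of_isUnit_det_fin_two {O : Type*} [CommRing O] {ϖ : O}
    (hϖ : ¬ IsUnit ϖ) {h : Matrix (Fin 2) (Fin 2) O} (hh : IsUnit h.det) :
    ¬ (ϖ ∣ h 1 0 ∧ ϖ ∣ h 1 1) := by
  rintro ⟨h₀, h₁⟩
  rw [Matrix.det_fin_two] at hh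
  exact hϖ (isUnit_of_dvd_unit ((h₁.mul_left _).sub (h₀.mul_left _)) hh)

theorem IsUnipUpper.mul_apply_three {F : Type*} [Field F] {u : Matrix (Fin 4) (Fin 4) F}
    (hu : IsUnipUpper u) (M : Matrix (Fin 4) (Fin 4) F) (j : Fin 4) : (u * M) 3 j = M 3 j := by
  simp [Matrix.mul_apply, Fin.sum_univ_four, hu.1 3, hu.2 3 0 (by decide), hu.2 3 1 (by decide),
    hu.2 3 2 (by decide)]

-- The norm from `F[σ_f]` to `F`, a quadratic extension as `σ_f² = d σ_f + c`.
def sigmaNorm {O : Type*} [CommRing O] (c d a b : O) : O := a * (a + b * d) - b ^ 2 * c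

theorem sigmaNorm_mul_sigma {O : Type*} [CommRing O] (c d a b : O) :
    sigmaNorm c d (b * c) (a + b * d) = -c * sigmaNorm c d a b := by
  unfold sigmaNorm; ring

theorem not_dvd_of_isUnit_sigmaNorm {O : Type*} [CommRing O] {c d a b ϖ s t : O}
    (hϖ : ¬ IsUnit ϖ) (hab : IsUnit (sigmaNorm c d a b)) (hb : ϖ ∣ b + ϖ * s) :
    ¬ ϖ ∣ a + b * d + ϖ * t := by
  intro ha
  have hb' : ϖ ∣ b := (dvd_add_left (dvd_mul_right ϖ s)).mp hb
  have ha' : ϖ ∣ a + b * d := (dvd_add_left (dvd_mul_right ϖ t)).mp ha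
  exact hϖ (isUnit_of_dvd_unit
    ((ha'.mul_left a).sub (dvd_mul_of_dvd_left (dvd_pow hb' two_ne_zero) c)) hab)

noncomputable def sigmaPoly (F : Type*) [Field F] {O : Type*} [CommRing O] [Algebra O F]
    (c d ϖ a b : O) : Matrix (Fin 4) (Fin 4) F :=
  algebraMap O F a • 1 + algebraMap O F b • sigmaf F c d ϖ

section SigmaF

variable {O : Type*} [CommRing O] {F : Type*} [Field F] [Algebra O F] {c d ϖ : O}

theorem mMatf_eq_sigmaPoly (x0 x1 : O) :
    mMatf F c d ϖ x0 x1 = sigmaPoly F c d ϖ (x0 * c) x1 := rfl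

theorem sigmaf_eq (hϖ : algebraMap O F ϖ ≠ 0) :
    sigmaf F c d ϖ =
      !![0, 0, algebraMap O F c * (algebraMap O F ϖ)⁻¹, 0;
         0, 0, 0, algebraMap O F c * (algebraMap O F ϖ)⁻¹;
         algebraMap O F ϖ, 0, algebraMap O F d, 0;
         0, algebraMap O F ϖ, 0, algebraMap O F d] := by
  ext i j
  fin_cases i <;> fin_cases j <;> simp [sigmaf, betaf, sq, _root_.zpow_neg] <;> field_simp

theorem sigmaPoly_eq (hϖ : algebraMap O F ϖ ≠ 0) (a b : O) :
    sigmaPoly F c d ϖ a b =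
      !![algebraMap O F a, 0, algebraMap O F (b * c) * (algebraMap O F ϖ)⁻¹, 0;
         0, algebraMap O F a, 0, algebraMap O F (b * c) * (algebraMap O F ϖ)⁻¹;
         algebraMap O F (ϖ * b), 0, algebraMap O F (a + b * d), 0;
         0, algebraMap O F (ϖ * b), 0, algebraMap O F (a + b * d)] := by
  rw [sigmaPoly, sigmaf_eq hϖ]
  ext i j
  fin_cases i <;> fin_cases j <;> simp [-algebraMap_smul] <;> ring

theorem det_sigmaPoly (hϖ : algebraMap O F ϖ ≠ 0) (a b : O) :
    (sigmaPoly F c d ϖ a b).det = algebraMap O F (sigmaNorm c d a b) ^ 2 := by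
  rw [sigmaPoly_eq hϖ]
  simp [Matrix.det_succ_row_zero, Fin.sum_univ_succ, Fin.succAbove, sigmaNorm]
  field_simp
  ring

theorem sigmaf_mul_sigmaPoly (hϖ : algebraMap O F ϖ ≠ 0) (a b : O) :
    sigmaf F c d ϖ * sigmaPoly F c d ϖ a b = sigmaPoly F c d ϖ (b * c) (a + b * d) := by
  rw [sigmaPoly_eq hϖ, sigmaPoly_eq hϖ, sigmaf_eq hϖ]
  ext i j
  fin_cases i <;> fin_cases j <;> simp [Matrix.mul_apply, Fin.sum_univ_four] <;> field_simp

theorem betaf_sq (hϖ : algebraMap O F ϖ ≠ 0) :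
    betaf F c d ϖ ^ 2 = (algebraMap O F ϖ)⁻¹ • sigmaf F c d ϖ := by
  rw [sigmaf, smul_smul, inv_mul_cancel₀ hϖ, one_smul]

theorem betaf_sq_mul_sigmaPoly (hϖ : algebraMap O F ϖ ≠ 0) (a b : O) :
    betaf F c d ϖ ^ 2 * sigmaPoly F c d ϖ a b =
      (algebraMap O F ϖ)⁻¹ • sigmaPoly F c d ϖ (b * c) (a + b * d) := by
  rw [betaf_sq hϖ, Matrix.smul_mul, sigmaf_mul_sigmaPoly hϖ]

theorem det_betaf : (betaf F c d ϖ).det = -(algebraMap O F c * algebraMap O F ϖ ^ (-2 : ℤ)) := by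
  simp [betaf, Matrix.det_succ_row_zero, Fin.sum_univ_succ, Fin.succAbove]
  ring

theorem isUnit_det_betaf (hϖ : algebraMap O F ϖ ≠ 0) (hc : IsUnit c) :
    IsUnit (betaf F c d ϖ).det := by
  rw [det_betaf, isUnit_iff_ne_zero]
  exact neg_ne_zero.mpr (mul_ne_zero (hc.map (algebraMap O F)).ne_zero (zpow_ne_zero _ hϖ))

theorem betaf_mul_apply_three (M : Matrix (Fin 4) (Fin 4) F) (j : Fin 4) :
    (betaf F c d ϖ * M) 3 j = M 2 j := by
  simp [betaf, Matrix.mul_apply, Fin.sum_univ_four]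

theorem exists_betaf_sq_zpow_mul_sigmaPoly (hϖ : algebraMap O F ϖ ≠ 0) (hc : IsUnit c)
    {a b : O} (hab : IsUnit (sigmaNorm c d a b)) (e : ℤ) :
    ∃ a' b' : O, IsUnit (sigmaNorm c d a' b') ∧
      (betaf F c d ϖ ^ 2) ^ e * sigmaPoly F c d ϖ a b =
        algebraMap O F ϖ ^ (-e) • sigmaPoly F c d ϖ a' b' := by
  have hβ : IsUnit (betaf F c d ϖ ^ 2).det := by
    rw [Matrix.det_pow]; exact (isUnit_det_betaf hϖ hc).pow 2
  induction e using Int.induction_on with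
  | zero => exact ⟨a, b, hab, by simp⟩
  | succ e ih =>
    obtain ⟨a', b', hab', h⟩ := ih
    refine ⟨b' * c, a' + b' * d, ?_, ?_⟩
    · rw [sigmaNorm_mul_sigma]; exact hc.neg.mul hab'
    · rw [add_comm (e : ℤ), Matrix.zpow_one_add hβ, Matrix.mul_assoc, h, Matrix.mul_smul,
        betaf_sq_mul_sigmaPoly hϖ, smul_smul, ← _root_.zpow_neg_one, ← zpow_add₀ hϖ, neg_add,
        add_comm]
  | pred e ih =>
    obtain ⟨a', b', hab', h⟩ := ih
    set a'' := b' - a' * ↑hc.unit⁻¹ * d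
    set b'' := a' * ↑hc.unit⁻¹
    -- `a' + b' σ_f = σ_f (a'' + b'' σ_f)`, solvable because `c` is a unit
    have ha : b'' * c = a' := by simp [b'', mul_assoc]
    have hb : a'' + b'' * d = b' := by ring
    have hS : sigmaPoly F c d ϖ a' b' =
        algebraMap O F ϖ • (betaf F c d ϖ ^ 2 * sigmaPoly F c d ϖ a'' b'') := by
      rw [betaf_sq_mul_sigmaPoly hϖ, ha, hb, smul_smul, mul_inv_cancel₀ hϖ, one_smul]
    refine ⟨a'', b'', ?_, ?_⟩
    · rw [← ha, ← hb, sigmaNorm_mul_sigma] at hab'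
      exact isUnit_of_mul_isUnit_right hab'
    · rw [show -(e : ℤ) - 1 = -1 + -e by ring, Matrix.zpow_add hβ, Matrix.zpow_neg_one,
        Matrix.mul_assoc, h, hS, Matrix.mul_smul, Matrix.mul_smul,
        Matrix.nonsing_inv_mul_cancel_left _ _ hβ, smul_smul, ← zpow_add_one₀ hϖ]
      ring_nf

theorem exists_betaf_zpow_mul_sigmaPoly (hϖ : algebraMap O F ϖ ≠ 0) (hc : IsUnit c)
    {a b : O} (hab : IsUnit (sigmaNorm c d a b)) (k : ℤ) :
    ∃ (e : ℤ) (a' b' : O), IsUnit (sigmaNorm c d a' b') ∧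
      ((k = 2 * e ∧ betaf F c d ϖ ^ k * sigmaPoly F c d ϖ a b =
          algebraMap O F ϖ ^ (-e) • sigmaPoly F c d ϖ a' b') ∨
        (k = 2 * e + 1 ∧ betaf F c d ϖ ^ k * sigmaPoly F c d ϖ a b =
          algebraMap O F ϖ ^ (-e) • (betaf F c d ϖ * sigmaPoly F c d ϖ a' b'))) := by
  obtain ⟨a', b', hab', h⟩ := exists_betaf_sq_zpow_mul_sigmaPoly hϖ hc hab (k / 2)
  have hk : betaf F c d ϖ ^ k = betaf F c d ϖ ^ (k % 2) * (betaf F c d ϖ ^ 2) ^ (k / 2) := by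
    rw [← zpow_ofNat, ← Matrix.zpow_mul _ (isUnit_det_betaf hϖ hc),
      ← Matrix.zpow_add (isUnit_det_betaf hϖ hc), Int.emod_add_mul_ediv]
  refine ⟨k / 2, a', b', hab', ?_⟩
  rcases Int.emod_two_eq_zero_or_one k with hk2 | hk2
  · exact Or.inl ⟨by omega, by rw [hk, hk2, zpow_zero, Matrix.one_mul, h]⟩
  · exact Or.inr ⟨by omega, by rw [hk, hk2, zpow_one, Matrix.mul_assoc, h, Matrix.mul_smul]⟩

theorem sigmaPoly_mul_one_add_apply_three (hϖ : algebraMap O F ϖ ≠ 0)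
    {q : Matrix (Fin 4) (Fin 4) F} (hq : ∀ i j, inPpow ϖ (eMatf i j) (q i j)) (a b : O) :
    ∃ s t : O, (sigmaPoly F c d ϖ a b * (1 + q)) 3 1 = algebraMap O F (ϖ * (b + ϖ * s)) ∧
      (sigmaPoly F c d ϖ a b * (1 + q)) 3 3 = algebraMap O F (a + b * d + ϖ * t) := by
  obtain ⟨t₁₁, h₁₁⟩ := hq 1 1
  obtain ⟨t₃₁, h₃₁⟩ := hq 3 1
  obtain ⟨t₁₃, h₁₃⟩ := hq 1 3
  obtain ⟨t₃₃, h₃₃⟩ := hq 3 3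
  refine ⟨b * t₁₁ + (a + b * d) * t₃₁, b * t₁₃ + (a + b * d) * t₃₃, ?_, ?_⟩ <;>
  · simp [sigmaPoly_eq hϖ, Matrix.mul_apply, Fin.sum_univ_four, h₁₁, h₃₁, h₁₃, h₃₃, eMatf]
    ring

theorem sigmaPoly_mul_one_add_apply_two (hϖ : algebraMap O F ϖ ≠ 0)
    {q : Matrix (Fin 4) (Fin 4) F} (hq : ∀ i j, inPpow ϖ (eMatf i j) (q i j)) (a b : O) :
    ∃ s t : O, (sigmaPoly F c d ϖ a b * (1 + q)) 2 0 = algebraMap O F (ϖ * (b + ϖ * s)) ∧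
      (sigmaPoly F c d ϖ a b * (1 + q)) 2 2 = algebraMap O F (a + b * d + ϖ * t) := by
  obtain ⟨t₀₀, h₀₀⟩ := hq 0 0
  obtain ⟨t₂₀, h₂₀⟩ := hq 2 0
  obtain ⟨t₀₂, h₀₂⟩ := hq 0 2
  obtain ⟨t₂₂, h₂₂⟩ := hq 2 2
  refine ⟨b * t₀₀ + (a + b * d) * t₂₀, b * t₀₂ + (a + b * d) * t₂₂, ?_, ?_⟩ <;>
  · simp [sigmaPoly_eq hϖ, Matrix.mul_apply, Fin.sum_univ_four, h₀₀, h₂₀, h₀₂, h₂₂, eMatf]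
    ring

variable [IsFractionRing O F]

theorem eq_zero_or_eq_one_of_apply_three_smul_sigmaPoly_mul (hϖ : Irreducible ϖ)
    {q : Matrix (Fin 4) (Fin 4) F} (hq : ∀ i j, inPpow ϖ (eMatf i j) (q i j)) {a b : O}
    (hab : IsUnit (sigmaNorm c d a b)) {e : ℤ} {g₁ g₂ : O} (hg : ¬ (ϖ ∣ g₁ ∧ ϖ ∣ g₂))
    (h₁ : algebraMap O F g₁ = (algebraMap O F ϖ ^ (-e) • sigmaPoly F c d ϖ a b * (1 + q)) 3 1)
    (h₂ : algebraMap O F g₂ = (algebraMap O F ϖ ^ (-e) • sigmaPoly F c d ϖ a b * (1 + q)) 3 3) :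
    e = 0 ∨ e = 1 := by
  have hϖF : algebraMap O F ϖ ≠ 0 :=
    (map_ne_zero_iff _ (IsFractionRing.injective O F)).mpr hϖ.ne_zero
  obtain ⟨s, t, h₃₁, h₃₃⟩ := sigmaPoly_mul_one_add_apply_three hϖF hq a b
  rw [Matrix.smul_mul, Matrix.smul_apply, smul_eq_mul, h₃₁] at h₁
  rw [Matrix.smul_mul, Matrix.smul_apply, smul_eq_mul, h₃₃] at h₂
  exact eq_zero_or_eq_one_of_algebraMap_eq_zpow_mul hϖF hg
    (fun h => not_dvd_of_isUnit_sigmaNorm hϖ.not_isUnit hab h.1 h.2) h₁ h₂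

theorem not_apply_three_eq_zero_smul_betaf_mul_sigmaPoly_mul (hϖ : Irreducible ϖ)
    {q : Matrix (Fin 4) (Fin 4) F} (hq : ∀ i j, inPpow ϖ (eMatf i j) (q i j)) {a b : O}
    (hab : IsUnit (sigmaNorm c d a b)) (e : ℤ) :
    ¬ ((algebraMap O F ϖ ^ (-e) • (betaf F c d ϖ * sigmaPoly F c d ϖ a b) * (1 + q)) 3 0 = 0 ∧
      (algebraMap O F ϖ ^ (-e) • (betaf F c d ϖ * sigmaPoly F c d ϖ a b) * (1 + q)) 3 2 = 0) := by
  rintro ⟨h₀, h₂⟩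
  have inj := IsFractionRing.injective O F
  have hϖF : algebraMap O F ϖ ≠ 0 := (map_ne_zero_iff _ inj).mpr hϖ.ne_zero
  obtain ⟨s, t, h₂₀, h₂₂⟩ := sigmaPoly_mul_one_add_apply_two hϖF hq a b
  rw [Matrix.smul_mul, Matrix.smul_apply, smul_eq_mul, Matrix.mul_assoc, betaf_mul_apply_three,
    h₂₀, map_mul, mul_eq_zero, mul_eq_zero, map_eq_zero_iff _ inj, map_eq_zero_iff _ inj] at h₀
  rw [Matrix.smul_mul, Matrix.smul_apply, smul_eq_mul, Matrix.mul_assoc, betaf_mul_apply_three,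
    h₂₂, mul_eq_zero, map_eq_zero_iff _ inj] at h₂
  have hB := (h₀.resolve_left (zpow_ne_zero _ hϖF)).resolve_left hϖ.ne_zero
  have hA := h₂.resolve_left (zpow_ne_zero _ hϖF)
  exact not_dvd_of_isUnit_sigmaNorm hϖ.not_isUnit hab (hB ▸ dvd_zero ϖ) (hA ▸ dvd_zero ϖ)

end SigmaF

theorem middle_support_lemma_general
    {O : Type*} [CommRing O] [IsDomain O] [IsDiscreteValuationRing O]
    {F : Type*} [Field F] [Algebra O F] [IsFractionRing O F]
    (ϖ : O) (hϖ : Irreducible ϖ) (c d : O)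
    (hf : Irreducible ((X ^ 2 - C d * X - C c : Polynomial O).map (residue O)))
    (r : ℤ) (h : Matrix (Fin 2) (Fin 2) O) (hh : IsUnit h.det) (x : F)
    (k : ℤ) (u : Matrix (Fin 4) (Fin 4) F) (hu : IsUnipUpper u)
    (y : Matrix (Fin 4) (Fin 4) F) (hy : inJf F c d ϖ y)
    (heq : alphaMat ϖ r h x = u * (betaf F c d ϖ) ^ k * y) :
    k = 0 ∨ k = 2 := by
  obtain ⟨x0, x1, z, ⟨q, hq, rfl⟩, ⟨w, hw⟩, rfl⟩ := hy
  have inj := IsFractionRing.injective O F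
  have hϖF : algebraMap O F ϖ ≠ 0 := (map_ne_zero_iff _ inj).mpr hϖ.ne_zero
  have hc : IsUnit c := isUnit_of_irreducible_map_residue hf
  have hm : IsUnit (sigmaNorm c d (x0 * c) x1) := by
    have hw' : (w : O) = sigmaNorm c d (x0 * c) x1 ^ 2 :=
      inj (by rw [hw, map_pow, mMatf_eq_sigmaPoly, det_sigmaPoly hϖF])
    exact (isUnit_pow_iff two_ne_zero).mp (hw' ▸ w.isUnit)
  have hrow : ∀ j, alphaMat ϖ r h x 3 j =
      (betaf F c d ϖ ^ k * sigmaPoly F c d ϖ (x0 * c) x1 * (1 + q)) 3 j := fun j => by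
    rw [heq, Matrix.mul_assoc u, hu.mul_apply_three, ← Matrix.mul_assoc, mMatf_eq_sigmaPoly]
  obtain ⟨e, a, b, hab, ⟨rfl, hβ⟩ | ⟨rfl, hβ⟩⟩ := exists_betaf_zpow_mul_sigmaPoly hϖF hc hm k
  · rw [hβ] at hrow
    rcases eq_zero_or_eq_one_of_apply_three_smul_sigmaPoly_mul hϖ hq hab
      (not_dvd_and_dvd_of_isUnit_det_fin_two hϖ.not_isUnit hh) (hrow 1) (hrow 3) with rfl | rfl
    <;> simp
  · rw [hβ] at hrow
    exact (not_apply_three_eq_zero_smul_betaf_mul_sigmaPoly_mul hϖ hq hab e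
      ⟨(hrow 0).symm, (hrow 2).symm⟩).elim

theorem middle_support_lemma
    {O : Type*} [CommRing O] [IsDomain O] [IsDiscreteValuationRing O] [CharZero O]
    {F : Type*} [Field F] [Algebra O F] [IsFractionRing O F]
    (ϖ : O) (hϖ : Irreducible ϖ) (c d : O)
    (hf : Irreducible ((X ^ 2 - C d * X - C c : Polynomial O).map (residue O)))
    (r : ℤ) (h : Matrix (Fin 2) (Fin 2) O) (hh : IsUnit h.det) (x : F)
    (k : ℤ) (u : Matrix (Fin 4) (Fin 4) F) (hu : IsUnipUpper u)
    (y : Matrix (Fin 4) (Fin 4) F) (hy : inJf F c d ϖ y)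
    (heq : alphaMat ϖ r h x = u * (betaf F c d ϖ) ^ k * y) :
    k = 0 ∨ k = 2 :=
  middle_support_lemma_general ϖ hϖ c d hf r h hh x k u hu y hy heq
end

section
/- Suppose that for some k ∈ ℤ there exist u ∈ N(4,F) and y ∈ J_{f_M} such that α(r,h,x) = u · (ϖ^k I_4) · y. Then −2 ≤ k ≤ 0. (Equivalently: if k does not lie in {−2,−1,0}, then α(r,h,x) does not lie in the double coset N(4,F)·ϖ^k·J_{f_M}.) -/
/-!
Conjugation by `D = diag(1, ϖ, ϖ², ϖ³)` turns `σ` into the companion matrix of `X⁴ - bX² - a`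
and `U¹_M` into `1 + ϖ M₄(O_F)`, so every `y ∈ J_{f_M}` is `D Y D⁻¹` with `Y ∈ GL₄(O_F)`.
As `u` is unipotent upper triangular, the last row of `α(r,h,x)` is `ϖ^k` times that of `y`:
`(0, h₂₁, 0, h₂₂) = (ϖ^{k+3} Y₄₁, ϖ^{k+2} Y₄₂, ϖ^{k+1} Y₄₃, ϖ^k Y₄₄)`.
For `k > 0` the second row of `h` is divisible by `ϖ`, contradicting `h ∈ GL₂(O_F)`;
for `k < -2` the last row of `Y` is, contradicting `Y ∈ GL₄(O_F)`.
-/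

open Matrix Polynomial IsLocalRing

/-- The matrix `β_{f_M}`. -/
noncomputable def betaM (F : Type*) [Field F] {O : Type*} [CommRing O] [Algebra O F]
    (a b ϖ : O) : Matrix (Fin 4) (Fin 4) F :=
  !![0, 0, 0, algebraMap O F a * (algebraMap O F ϖ) ^ (-4 : ℤ);
     1, 0, 0, 0;
     0, 1, 0, algebraMap O F b * (algebraMap O F ϖ) ^ (-2 : ℤ);
     0, 0, 1, 0]

/-- The matrix `σ = ϖ · β_{f_M}`. -/
noncomputable def sigmaM (F : Type*) [Field F] {O : Type*} [CommRing O] [Algebra O F]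
    (a b ϖ : O) : Matrix (Fin 4) (Fin 4) F :=
  algebraMap O F ϖ • betaM F a b ϖ

/-- Membership in `U^1_M = I_4 + ϖ·𝔄_M`, where the `(i,j)` entry of an element of `𝔄_M`
lies in `P_F^{i-j}`. -/
def inU1M {O F : Type*} [CommRing O] [Field F] [Algebra O F]
    (ϖ : O) (z : Matrix (Fin 4) (Fin 4) F) : Prop :=
  ∃ p : Matrix (Fin 4) (Fin 4) F,
    (∀ i j : Fin 4, inPpow ϖ (((i : ℕ) : ℤ) - ((j : ℕ) : ℤ)) (p i j)) ∧
    z = 1 + algebraMap O F ϖ • p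

/-- The matrix `x₀·I₄ + x₁σ + x₂σ² + x₃σ³`. -/
noncomputable def mMatM (F : Type*) [Field F] {O : Type*} [CommRing O] [Algebra O F]
    (a b ϖ x0 x1 x2 x3 : O) : Matrix (Fin 4) (Fin 4) F :=
  algebraMap O F x0 • (1 : Matrix (Fin 4) (Fin 4) F) +
    algebraMap O F x1 • sigmaM F a b ϖ +
    algebraMap O F x2 • (sigmaM F a b ϖ) ^ 2 +
    algebraMap O F x3 • (sigmaM F a b ϖ) ^ 3

/-- Membership in `J_{f_M}`. -/
def inJM (F : Type*) [Field F] {O : Type*} [CommRing O] [Algebra O F]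
    (a b ϖ : O) (y : Matrix (Fin 4) (Fin 4) F) : Prop :=
  ∃ (x0 x1 x2 x3 : O) (z : Matrix (Fin 4) (Fin 4) F),
    inU1M ϖ z ∧
    (∃ w : Oˣ, algebraMap O F (w : O) = (mMatM F a b ϖ x0 x1 x2 x3).det) ∧
    y = mMatM F a b ϖ x0 x1 x2 x3 * z

section DiagonalConjugation

variable {O F n : Type*} [CommRing O] [Field F] [Algebra O F] [Fintype n] [DecidableEq n]

noncomputable def diagonalUnit (d : n → Fˣ) : (Matrix n n F)ˣ :=
  Units.map (diagonalRingHom n F).toMonoidHom (MulEquiv.piUnits.symm d)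

/-- `N ↦ D N D⁻¹` with `D = diagonal d`, after extending scalars from `O` to `F`. -/
noncomputable def diagConj (d : n → Fˣ) : Matrix n n O →ₐ[O] Matrix n n F :=
  (MulSemiringAction.toAlgHom O (Matrix n n F) (ConjAct.toConjAct (diagonalUnit d))).comp
    (Algebra.ofId O F).mapMatrix

theorem diagConj_apply (d : n → Fˣ) (N : Matrix n n O) (i j : n) :
    diagConj d N i j = d i * algebraMap O F (N i j) * (d j)⁻¹ := by
  simp [diagConj, diagonalUnit, ConjAct.units_smul_def, mul_diagonal, diagonal_mul]

theorem det_diagConj (d : n → Fˣ) (N : Matrix n n O) :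
    (diagConj d N).det = algebraMap O F N.det := by
  simp only [diagConj, AlgHom.comp_apply, MulSemiringAction.toAlgHom_apply,
    ConjAct.units_smul_def, ConjAct.ofConjAct_toConjAct, AlgHom.mapMatrix_apply, det_mul]
  rw [mul_right_comm, ← det_mul, Units.mul_inv, det_one, one_mul]
  exact (RingHom.map_det (algebraMap O F) N).symm

end DiagonalConjugation

theorem Matrix.dvd_det_of_forall_dvd_row {R n : Type*} [CommRing R] [Fintype n] [DecidableEq n]
    {p : R} {M : Matrix n n R} (i : n) (h : ∀ j, p ∣ M i j) : p ∣ M.det := by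
  choose v hv using h
  have hM : M = updateRow M i (p • v) := by
    ext i' j
    by_cases hi : i' = i
    · subst hi; simp [hv]
    · simp [hi]
  rw [hM, det_updateRow_smul]
  exact dvd_mul_right _ _

theorem Matrix.isUnit_det_one_add_smul {R n : Type*} [CommRing R] [IsLocalRing R] [Fintype n]
    [DecidableEq n] {p : R} (hp : ¬IsUnit p) (P : Matrix n n R) : IsUnit (1 + p • P).det := by
  have hres : (IsLocalRing.residue R).mapMatrix (1 + p • P) = 1 := by
    have : IsLocalRing.residue R p = 0 := (IsLocalRing.residue_eq_zero_iff p).2 hp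
    ext i j
    by_cases hij : i = j <;> simp [one_apply, hij, this]
  have : IsLocalRing.residue R (1 + p • P).det = 1 := by
    rw [RingHom.map_det, hres, det_one]
  exact (IsLocalRing.residue_ne_zero_iff_isUnit _).1 (this ▸ one_ne_zero)

section

variable {O F : Type*} [CommRing O] [Field F] [Algebra O F] {ϖ : O} {t : Fˣ}

theorem dvd_of_zpow_mul_eq_zpow_mul [FaithfulSMul O F] (hϖ : ϖ ≠ 0) {c d : O} {m n : ℤ}
    (hmn : m < n)
    (h : algebraMap O F ϖ ^ m * algebraMap O F c = algebraMap O F ϖ ^ n * algebraMap O F d) :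
    ϖ ∣ c := by
  have hinj := FaithfulSMul.algebraMap_injective O F
  have hϖF : algebraMap O F ϖ ≠ 0 := (map_ne_zero_iff _ hinj).2 hϖ
  obtain ⟨e, he⟩ : ∃ e : ℕ, n - m = e + 1 := ⟨(n - m - 1).toNat, by omega⟩
  have hc : c = ϖ ^ (e + 1) * d := by
    apply hinj
    rw [map_mul, map_pow, ← zpow_natCast, Nat.cast_succ, ← he, zpow_sub₀ hϖF, div_mul_eq_mul_div,
      eq_div_iff (zpow_ne_zero _ hϖF), ← h, mul_comm]
  exact hc ▸ (dvd_pow_self ϖ e.succ_ne_zero).mul_right d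

theorem sigmaM_eq_diagConj (ht : (t : F) = algebraMap O F ϖ) (a b : O) :
    sigmaM F a b ϖ = diagConj (fun i : Fin 4 => t ^ (i : ℕ))
      !![0, 0, 0, a; 1, 0, 0, 0; 0, 1, 0, b; 0, 0, 1, 0] := by
  ext i j
  rw [diagConj_apply]
  fin_cases i <;> fin_cases j <;> simp [sigmaM, betaM, ← ht] <;> field_simp

theorem exists_mMatM_eq_diagConj (ht : (t : F) = algebraMap O F ϖ) (a b x0 x1 x2 x3 : O) :
    ∃ M : Matrix (Fin 4) (Fin 4) O,
      mMatM F a b ϖ x0 x1 x2 x3 = diagConj (fun i : Fin 4 => t ^ (i : ℕ)) M := by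
  set S : Matrix (Fin 4) (Fin 4) O := !![0, 0, 0, a; 1, 0, 0, 0; 0, 1, 0, b; 0, 0, 1, 0]
  refine ⟨x0 • 1 + x1 • S + x2 • S ^ 2 + x3 • S ^ 3, ?_⟩
  simp only [mMatM, sigmaM_eq_diagConj ht, map_add, map_smul, map_pow, map_one, algebraMap_smul]
  rfl

theorem inU1M.exists_eq_diagConj {z : Matrix (Fin 4) (Fin 4) F} (ht : (t : F) = algebraMap O F ϖ)
    (hz : inU1M ϖ z) :
    ∃ P : Matrix (Fin 4) (Fin 4) O, z = diagConj (fun i : Fin 4 => t ^ (i : ℕ)) (1 + ϖ • P) := by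
  obtain ⟨p, hp, rfl⟩ := hz
  choose T hT using hp
  refine ⟨of T, ?_⟩
  rw [map_add, map_one, map_smul, ← algebraMap_smul F ϖ]
  congr 2
  ext i j
  rw [diagConj_apply, hT, ← ht, zpow_sub₀ t.ne_zero, zpow_natCast, zpow_natCast]
  simp [div_eq_mul_inv, mul_right_comm]

theorem inJM.exists_eq_diagConj [IsLocalRing O] [FaithfulSMul O F] (hϖ : ¬IsUnit ϖ)
    (ht : (t : F) = algebraMap O F ϖ) {a b : O} {y : Matrix (Fin 4) (Fin 4) F}
    (hy : inJM F a b ϖ y) :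
    ∃ Y : Matrix (Fin 4) (Fin 4) O,
      IsUnit Y.det ∧ y = diagConj (fun i : Fin 4 => t ^ (i : ℕ)) Y := by
  obtain ⟨x0, x1, x2, x3, z, hz, ⟨w, hw⟩, rfl⟩ := hy
  obtain ⟨M, hM⟩ := exists_mMatM_eq_diagConj ht a b x0 x1 x2 x3
  obtain ⟨P, rfl⟩ := hz.exists_eq_diagConj ht
  have hMdet : M.det = w :=
    FaithfulSMul.algebraMap_injective O F (by rw [← det_diagConj, ← hM, hw])
  refine ⟨M * (1 + ϖ • P), ?_, by rw [hM, map_mul]⟩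
  rw [det_mul, hMdet]
  exact w.isUnit.mul (isUnit_det_one_add_smul hϖ P)

theorem alphaMat_row_three (r : ℤ) (h : Matrix (Fin 2) (Fin 2) O) (x : F) :
    alphaMat ϖ r h x 3 = ![0, algebraMap O F (h 1 0), 0, algebraMap O F (h 1 1)] := by
  ext j
  fin_cases j <;> rfl

theorem row_three_of_alphaMat_eq_mul_diagConj [FaithfulSMul O F]
    (hϖF : algebraMap O F ϖ ≠ 0) {r k : ℤ} {h : Matrix (Fin 2) (Fin 2) O} {x : F}
    {u : Matrix (Fin 4) (Fin 4) F} (hu : IsUnipUpper u)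
    {Y : Matrix (Fin 4) (Fin 4) O}
    (heq : alphaMat ϖ r h x = u * (algebraMap O F ϖ ^ k • 1) *
      diagConj (fun i : Fin 4 => Units.mk0 _ hϖF ^ (i : ℕ)) Y) :
    Y 3 0 = 0 ∧ Y 3 2 = 0 ∧
      algebraMap O F ϖ ^ (1 : ℤ) * algebraMap O F (h 1 0) =
        algebraMap O F ϖ ^ (k + 3) * algebraMap O F (Y 3 1) ∧
      algebraMap O F ϖ ^ (3 : ℤ) * algebraMap O F (h 1 1) =
        algebraMap O F ϖ ^ (k + 3) * algebraMap O F (Y 3 3) := by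
  have hrow : ∀ j : Fin 4, algebraMap O F ϖ ^ ((j : ℕ) : ℤ) * alphaMat ϖ r h x 3 j =
      algebraMap O F ϖ ^ (k + 3) * algebraMap O F (Y 3 j) := by
    intro j
    rw [heq, Matrix.mul_smul, Matrix.mul_one, Matrix.smul_mul, Matrix.smul_apply,
      hu.mul_apply_three, diagConj_apply]
    simp only [Units.val_inv_eq_inv_val, Units.val_pow_eq_pow_val, Units.val_mk0, smul_eq_mul,
      zpow_add₀ hϖF, zpow_natCast]
    field_simp
    exact mul_comm _ _
  refine ⟨?_, ?_, ?_, ?_⟩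
  · simpa [alphaMat_row_three, zpow_ne_zero _ hϖF] using hrow 0
  · simpa [alphaMat_row_three, zpow_ne_zero _ hϖF] using hrow 2
  · simpa [alphaMat_row_three] using hrow 1
  · simpa [alphaMat_row_three] using hrow 3

end

theorem biquadratic_support_lemma_general
    {O : Type*} [CommRing O] [IsDomain O] [IsDiscreteValuationRing O]
    {F : Type*} [Field F] [Algebra O F] [IsFractionRing O F]
    (ϖ : O) (hϖ : Irreducible ϖ) (a b : O)
    (r : ℤ) (h : Matrix (Fin 2) (Fin 2) O) (hh : IsUnit h.det) (x : F)
    (k : ℤ) (u : Matrix (Fin 4) (Fin 4) F) (hu : IsUnipUpper u)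
    (y : Matrix (Fin 4) (Fin 4) F) (hy : inJM F a b ϖ y)
    (heq : alphaMat ϖ r h x =
      u * ((algebraMap O F ϖ) ^ k • (1 : Matrix (Fin 4) (Fin 4) F)) * y) :
    -2 ≤ k ∧ k ≤ 0 := by
  have hϖ0 := hϖ.ne_zero
  have hϖF : algebraMap O F ϖ ≠ 0 := (map_ne_zero_iff _ (IsFractionRing.injective O F)).2 hϖ0
  obtain ⟨Y, hYdet, rfl⟩ := hy.exists_eq_diagConj hϖ.not_isUnit (t := Units.mk0 _ hϖF) rfl
  obtain ⟨hY0, hY2, hY1, hY3⟩ := row_three_of_alphaMat_eq_mul_diagConj hϖF hu heq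
  constructor
  · by_contra! hk
    have hrow : ∀ j, ϖ ∣ Y 3 j := by
      intro j
      fin_cases j
      · simp [hY0]
      · exact dvd_of_zpow_mul_eq_zpow_mul hϖ0 (by omega) hY1.symm
      · simp [hY2]
      · exact dvd_of_zpow_mul_eq_zpow_mul hϖ0 (by omega) hY3.symm
    exact hϖ.not_isUnit (isUnit_of_dvd_unit (dvd_det_of_forall_dvd_row 3 hrow) hYdet)
  · by_contra! hk
    have hrow : ∀ j, ϖ ∣ h 1 j := by
      intro j
      fin_cases j
      · exact dvd_of_zpow_mul_eq_zpow_mul hϖ0 (by omega) hY1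
      · exact dvd_of_zpow_mul_eq_zpow_mul hϖ0 (by omega) hY3
    exact hϖ.not_isUnit (isUnit_of_dvd_unit (dvd_det_of_forall_dvd_row 1 hrow) hh)

theorem biquadratic_support_lemma
    {O : Type*} [CommRing O] [IsDomain O] [IsDiscreteValuationRing O] [CharZero O]
    {F : Type*} [Field F] [Algebra O F] [IsFractionRing O F]
    (ϖ : O) (hϖ : Irreducible ϖ) (a b : O)
    (hf : Irreducible ((X ^ 4 - C b * X ^ 2 - C a : Polynomial O).map (residue O)))
    (r : ℤ) (h : Matrix (Fin 2) (Fin 2) O) (hh : IsUnit h.det) (x : F)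
    (k : ℤ) (u : Matrix (Fin 4) (Fin 4) F) (hu : IsUnipUpper u)
    (y : Matrix (Fin 4) (Fin 4) F) (hy : inJM F a b ϖ y)
    (heq : alphaMat ϖ r h x =
      u * ((algebraMap O F ϖ) ^ k • (1 : Matrix (Fin 4) (Fin 4) F)) * y) :
    -2 ≤ k ∧ k ≤ 0 :=
  biquadratic_support_lemma_general ϖ hϖ a b r h hh x k u hu y hy heq
end

section
/- Let y_{ij} ∈ O_F for 1 ≤ i,j ≤ 4 and let Y be the 4×4 matrix over F with rows (y_{11}, y_{12}, y_{13}ϖ^{-1}, y_{14}ϖ^{-1}), (y_{21}ϖ, y_{22}, y_{23}, y_{24}ϖ^{-1}), (y_{31}ϖ, y_{32}ϖ, y_{33}, y_{34}), (y_{41}ϖ^2, y_{42}ϖ, y_{43}ϖ, y_{44}). Then det(Y) ∈ O_F and det(Y) ≡ (y_{13}y_{31} − y_{11}y_{33})(y_{24}y_{42} − y_{22}y_{44}) modulo P_F. -/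
/-!
Conjugating `Y` by `diag(1, 1, ϖ, ϖ)` yields a matrix `Z` with entries in `O_F`, so
`det Y = det Z ∈ O_F`. Modulo `ϖ` the entries `(2,1), (2,3), (4,1), (4,3)` of `Z` vanish, and the
determinant of such a matrix factors as a product of two `2 × 2` determinants, on the index
sets `{1, 3}` and `{2, 4}`.
-/

open Matrix IsLocalRing

namespace Matrix

variable {n R : Type*} [Fintype n] [DecidableEq n]

theorem det_eq_of_mul_diagonal_eq_diagonal_mul [CommRing R] [IsDomain R]
    {Y Z : Matrix n n R} {d : n → R} (hd : ∀ i, d i ≠ 0)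
    (h : Y * diagonal d = diagonal d * Z) : Y.det = Z.det := by
  have hdet := congr_arg det h
  rw [det_mul, det_mul, det_diagonal, mul_comm] at hdet
  exact mul_left_cancel₀ (Finset.prod_ne_zero_iff.mpr fun i _ => hd i) hdet

theorem det_sub_det_mem_of_forall_sub_mem [CommRing R] {A B : Matrix n n R} {I : Ideal R}
    (h : ∀ i j, A i j - B i j ∈ I) : A.det - B.det ∈ I := by
  rw [← Ideal.Quotient.eq, RingHom.map_det, RingHom.map_det]
  congr 1
  ext i j
  exact Ideal.Quotient.eq.mpr (h i j)

theorem det_fin_four_of_checkerboard_zeros [CommRing R] (a b c d f h i j k l m p : R) :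
    !![a, b, c, d; 0, f, 0, h; i, j, k, l; 0, m, 0, p].det =
      (c * i - a * k) * (h * m - f * p) := by
  simp [det_succ_row_zero, Fin.sum_univ_succ, Fin.succAbove]
  ring

end Matrix

theorem det_in_order_and_congruence_general
    {O : Type*} [CommRing O] [IsDomain O] [IsDiscreteValuationRing O]
    {F : Type*} [Field F] [Algebra O F] [IsFractionRing O F]
    (ϖ : O) (hϖ : Irreducible ϖ)
    (y : Matrix (Fin 4) (Fin 4) O) :
    ∃ t : O,
      (!![algebraMap O F (y 0 0), algebraMap O F (y 0 1),
            algebraMap O F (y 0 2) * (algebraMap O F ϖ) ^ (-1 : ℤ),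
            algebraMap O F (y 0 3) * (algebraMap O F ϖ) ^ (-1 : ℤ);
          algebraMap O F (y 1 0) * algebraMap O F ϖ, algebraMap O F (y 1 1),
            algebraMap O F (y 1 2),
            algebraMap O F (y 1 3) * (algebraMap O F ϖ) ^ (-1 : ℤ);
          algebraMap O F (y 2 0) * algebraMap O F ϖ,
            algebraMap O F (y 2 1) * algebraMap O F ϖ, algebraMap O F (y 2 2),
            algebraMap O F (y 2 3);
          algebraMap O F (y 3 0) * algebraMap O F ϖ ^ 2,
            algebraMap O F (y 3 1) * algebraMap O F ϖ,
            algebraMap O F (y 3 2) * algebraMap O F ϖ,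
            algebraMap O F (y 3 3)] : Matrix (Fin 4) (Fin 4) F).det
          = algebraMap O F t ∧
      t - (y 0 2 * y 2 0 - y 0 0 * y 2 2) * (y 1 3 * y 3 1 - y 1 1 * y 3 3)
        ∈ maximalIdeal O := by
  have hϖF : algebraMap O F ϖ ≠ 0 :=
    (map_ne_zero_iff _ (IsFractionRing.injective O F)).mpr hϖ.ne_zero
  have hϖm : ϖ ∈ maximalIdeal O := hϖ.not_isUnit
  let Z : Matrix (Fin 4) (Fin 4) O :=
    !![y 0 0, y 0 1, y 0 2, y 0 3;
       y 1 0 * ϖ, y 1 1, y 1 2 * ϖ, y 1 3;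
       y 2 0, y 2 1, y 2 2, y 2 3;
       y 3 0 * ϖ, y 3 1, y 3 2 * ϖ, y 3 3]
  refine ⟨Z.det, ?_, ?_⟩
  · rw [RingHom.map_det]
    refine det_eq_of_mul_diagonal_eq_diagonal_mul
      (d := ![1, 1, algebraMap O F ϖ, algebraMap O F ϖ])
      (by intro i; fin_cases i <;> simp [hϖF]) ?_
    ext i j
    fin_cases i <;> fin_cases j <;> simp [Z] <;> field_simp
  · rw [← det_fin_four_of_checkerboard_zeros (y 0 0) (y 0 1) (y 0 2) (y 0 3) (y 1 1) (y 1 3)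
      (y 2 0) (y 2 1) (y 2 2) (y 2 3) (y 3 1) (y 3 3)]
    refine det_sub_det_mem_of_forall_sub_mem fun i j => ?_
    fin_cases i <;> fin_cases j <;> simp [Z, Ideal.mul_mem_left _ _ hϖm]

theorem det_in_order_and_congruence
    {O : Type*} [CommRing O] [IsDomain O] [IsDiscreteValuationRing O] [CharZero O]
    {F : Type*} [Field F] [Algebra O F] [IsFractionRing O F]
    (ϖ : O) (hϖ : Irreducible ϖ)
    (y : Matrix (Fin 4) (Fin 4) O) :
    ∃ t : O,
      (!![algebraMap O F (y 0 0), algebraMap O F (y 0 1),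
            algebraMap O F (y 0 2) * (algebraMap O F ϖ) ^ (-1 : ℤ),
            algebraMap O F (y 0 3) * (algebraMap O F ϖ) ^ (-1 : ℤ);
          algebraMap O F (y 1 0) * algebraMap O F ϖ, algebraMap O F (y 1 1),
            algebraMap O F (y 1 2),
            algebraMap O F (y 1 3) * (algebraMap O F ϖ) ^ (-1 : ℤ);
          algebraMap O F (y 2 0) * algebraMap O F ϖ,
            algebraMap O F (y 2 1) * algebraMap O F ϖ, algebraMap O F (y 2 2),
            algebraMap O F (y 2 3);
          algebraMap O F (y 3 0) * algebraMap O F ϖ ^ 2,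
            algebraMap O F (y 3 1) * algebraMap O F ϖ,
            algebraMap O F (y 3 2) * algebraMap O F ϖ,
            algebraMap O F (y 3 3)] : Matrix (Fin 4) (Fin 4) F).det
          = algebraMap O F t ∧
      t - (y 0 2 * y 2 0 - y 0 0 * y 2 2) * (y 1 3 * y 3 1 - y 1 1 * y 3 3)
        ∈ maximalIdeal O :=
  det_in_order_and_congruence_general ϖ hϖ y
end
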